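/- Let a > 0, v₀ < −v_⋆, w₀ > 0 and s₀ ∈ ℝ, and let (w, v) be a maximal solution of (LKS) on (s_−, s_+) with w(s₀) = w₀, v(s₀) = v₀. Then s_+ is finite, v(s) → −∞ as s → s_+⁻, and as s → s_+⁻: w(s) → +∞ if a < 1; w(s) converges to a finite positive limit if a = 1; and w(s) → 0 if a > 1. -/

import Mathlib

open Set Filter Topology

/-- A positive solution of the linear-diffusion traveling-wave system (LKS)
`w' = w((a−1)v − σ)`, `v' = λ/γ − v² − w/γ` on the open interval
`(sm, sp)` (endpoints in `EReal`). -/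
def IsLKSSol (a σ γ lam : ℝ) (sm sp : EReal) (w v : ℝ → ℝ) : Prop :=
  sm < sp ∧
  ∀ s : ℝ, sm < (s : EReal) → (s : EReal) < sp →
    0 < w s ∧
    HasDerivAt w (w s * ((a - 1) * v s - σ)) s ∧
    HasDerivAt v (lam / γ - v s ^ 2 - w s / γ) s

/-- A maximal positive solution of (LKS): it cannot be extended to a solution
with `w > 0` on any strictly larger open interval. -/
def IsMaxLKSSol (a σ γ lam : ℝ) (sm sp : EReal) (w v : ℝ → ℝ) : Prop :=
  IsLKSSol a σ γ lam sm sp w v ∧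
  ∀ (tm tp : EReal) (w₁ v₁ : ℝ → ℝ),
    tm ≤ sm → sp ≤ tp → (tm < sm ∨ sp < tp) →
    (∀ s : ℝ, sm < (s : EReal) → (s : EReal) < sp → w₁ s = w s ∧ v₁ s = v s) →
    ¬ IsLKSSol a σ γ lam tm tp w₁ v₁

/-!
Along a solution, `v' = λ/γ - v² - w/γ ≤ v⋆² - v²`. Hence `v` never climbs back above
`v₀ < -v⋆`, it is decreasing, and `(1/v)' = -v'/v² ≥ 1 - v⋆²/v₀² > 0`, so `1/v` would reach `0`
in finite time: `s₊` is finite. If `v` stayed bounded, `v` and `log w` (whose derivative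
`(a-1)v - σ` would then converge) would have limits, and a local `C¹` solution through the limit
point would continue the solution beyond `s₊`, against maximality; so `v → -∞`. Once `w` is known
to be bounded, the same equation gives `(1/v)' ≤ 2` near `s₊`, i.e. `v(s) ≤ -1/(2(s₊ - s))`, and
comparing `(log w)' = (a-1)v - σ` with the derivative of `log (s₊ - s)` sends `log w` to `-∞` when
`a > 1` (there `w` decreases) and to `+∞` when `a < 1` (there `w` eventually increases, so it
cannot stay bounded). For `a = 1`, `(log w)' = -σ`.
-/

lemma Convex.monotoneOn_of_hasDerivAt_nonneg {D : Set ℝ} {f f' : ℝ → ℝ} (hD : Convex ℝ D)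
    (hf : ∀ x ∈ D, HasDerivAt f (f' x) x) (hf' : ∀ x ∈ D, 0 ≤ f' x) : MonotoneOn f D :=
  monotoneOn_of_hasDerivWithinAt_nonneg hD (HasDerivAt.continuousOn hf)
    (fun x hx => (hf x (interior_subset hx)).hasDerivWithinAt)
    fun x hx => hf' x (interior_subset hx)

lemma Convex.antitoneOn_of_hasDerivAt_nonpos {D : Set ℝ} {f f' : ℝ → ℝ} (hD : Convex ℝ D)
    (hf : ∀ x ∈ D, HasDerivAt f (f' x) x) (hf' : ∀ x ∈ D, f' x ≤ 0) : AntitoneOn f D :=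
  antitoneOn_of_hasDerivWithinAt_nonpos hD (HasDerivAt.continuousOn hf)
    (fun x hx => (hf x (interior_subset hx)).hasDerivWithinAt)
    fun x hx => hf' x (interior_subset hx)

lemma MonotoneOn.tendsto_nhdsLT_atTop {β : Type*} [LinearOrder β] {f : ℝ → β} {t b : ℝ}
    (hf : MonotoneOn f (Ioo t b)) (hbdd : ¬ BddAbove (f '' Ioo t b)) :
    Tendsto f (𝓝[<] b) atTop := by
  refine tendsto_atTop.2 fun B => ?_
  obtain ⟨_, ⟨x, hx, rfl⟩, hBx⟩ := not_bddAbove_iff.1 hbdd B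
  filter_upwards [Ioo_mem_nhdsLT hx.2] with s hs
  exact hBx.le.trans (hf hx ⟨hx.1.trans hs.1, hs.2⟩ hs.1.le)

lemma exists_tendsto_nhdsLT_of_hasDerivAt {E : Type*} [NormedAddCommGroup E]
    [NormedSpace ℝ E] [CompleteSpace E] {u u' : ℝ → E} {b : ℝ} {L : E}
    (hu : ∀ᶠ s in 𝓝[<] b, HasDerivAt u (u' s) s) (hu' : Tendsto u' (𝓝[<] b) (𝓝 L)) :
    ∃ l, Tendsto u (𝓝[<] b) (𝓝 l) := by
  have hbound : ∀ᶠ s in 𝓝[<] b, ‖u' s‖ < ‖L‖ + 1 :=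
    hu'.norm.eventually (eventually_lt_nhds (lt_add_one _))
  obtain ⟨t, htb, ht⟩ := mem_nhdsLT_iff_exists_Ioo_subset.1 (hu.and hbound)
  have hlip : LipschitzOnWith ⟨‖L‖ + 1, by positivity⟩ u (Ioo t b) :=
    (convex_Ioo t b).lipschitzOnWith_of_nnnorm_hasDerivWithin_le
      (fun s hs => (ht hs).1.hasDerivWithinAt) fun s hs => (ht hs).2.le
  exact cauchy_map_iff_exists_tendsto.1 <| (cauchy_nhds.mono nhdsWithin_le_nhds).map_of_le
    hlip.uniformContinuousOn (le_principal_iff.2 (Ioo_mem_nhdsLT htb))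

lemma sub_le_mul_of_hasDerivAt_le_of_tendsto {g g' : ℝ → ℝ} {s b K L : ℝ} (hsb : s < b)
    (hg : ∀ x ∈ Ico s b, HasDerivAt g (g' x) x) (hle : ∀ x ∈ Ico s b, g' x ≤ K)
    (hlim : Tendsto g (𝓝[<] b) (𝓝 L)) : L - g s ≤ K * (b - s) := by
  have hinc : ∀ x ∈ Ico s b, g x - g s ≤ K * (x - s) := fun x hx =>
    (convex_Ico s b).image_sub_le_mul_sub_of_deriv_le (HasDerivAt.continuousOn hg)
      (fun y hy => (hg y (interior_subset hy)).differentiableAt.differentiableWithinAt)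
      (fun y hy => (hg y (interior_subset hy)).deriv ▸ hle y (interior_subset hy))
      s (left_mem_Ico.2 hsb) x hx hx.1
  refine le_of_tendsto_of_tendsto (hlim.sub_const _)
    ((continuous_const.mul (continuous_id.sub continuous_const)).tendsto' b _ rfl |>.mono_left
      nhdsWithin_le_nhds) ?_
  filter_upwards [Ioo_mem_nhdsLT hsb] with x hx using hinc x ⟨hx.1.le, hx.2⟩

lemma tendsto_log_sub_nhdsLT (b : ℝ) : Tendsto (fun s => Real.log (b - s)) (𝓝[<] b) atBot := by
  refine Real.tendsto_log_nhdsGT_zero.comp (tendsto_nhdsWithin_iff.2 ⟨?_, ?_⟩)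
  · exact ((continuous_sub_left b).tendsto' b 0 (sub_self b)).mono_left nhdsWithin_le_nhds
  · filter_upwards [self_mem_nhdsWithin] with s hs using sub_pos.2 (mem_Iio.1 hs)

lemma tendsto_atBot_of_hasDerivAt_le_sub_div {u u' : ℝ → ℝ} {b k C : ℝ} (hk : 0 < k)
    (hu : ∀ᶠ s in 𝓝[<] b, HasDerivAt u (u' s) s ∧ u' s ≤ C - k / (b - s)) :
    Tendsto u (𝓝[<] b) atBot := by
  obtain ⟨t, htb, ht⟩ := mem_nhdsLT_iff_exists_Ioo_subset.1 hu
  set g : ℝ → ℝ := fun s => u s - k * Real.log (b - s) - C * s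
  -- `k * log (b - s)` absorbs the singular part of the bound on `u'`
  have hg : AntitoneOn g (Ioo t b) := by
    refine (convex_Ioo t b).antitoneOn_of_hasDerivAt_nonpos
      (f' := fun s => u' s - k * (-1 / (b - s)) - C * 1) (fun s hs => ?_) (fun s hs => ?_)
    · exact ((ht hs).1.sub ((((hasDerivAt_id s).const_sub b).log
        (sub_pos.2 hs.2).ne').const_mul k)).sub ((hasDerivAt_id s).const_mul C)
    · have : k * (-1 / (b - s)) = -(k / (b - s)) := by ring
      simp only [this]
      linarith [(ht hs).2]
  obtain ⟨s₁, hs₁⟩ : (Ioo t b).Nonempty := nonempty_Ioo.2 htb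
  have hbound : Tendsto (fun s => g s₁ + k * Real.log (b - s) + C * s) (𝓝[<] b) atBot :=
    (tendsto_atBot_add_const_left _ _
      ((tendsto_const_mul_atBot_of_pos hk).2 (tendsto_log_sub_nhdsLT b))).atBot_add
      ((continuous_const_mul C).tendsto' b _ rfl |>.mono_left nhdsWithin_le_nhds)
  refine tendsto_atBot_mono' _ ?_ hbound
  filter_upwards [Ioo_mem_nhdsLT hs₁.2] with s hs
  have := hg hs₁ ⟨hs₁.1.trans hs.1, hs.2⟩ hs.1.le
  simp only [g] at this
  linarith

lemma exists_hasDerivAt_extension_of_tendsto {E : Type*} [NormedAddCommGroup E]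
    [NormedSpace ℝ E] [CompleteSpace E] {F : E → E} {f : ℝ → E} {t b : ℝ} {p : E}
    (hF : ContDiffAt ℝ 1 F p) (htb : t < b) (hf : ∀ s ∈ Ioo t b, HasDerivAt f (F (f s)) s)
    (hlim : Tendsto f (𝓝[<] b) (𝓝 p)) :
    ∃ δ > 0, ∃ g : ℝ → E, (∀ s < b, g s = f s) ∧ g b = p ∧
      ∀ s ∈ Ico b (b + δ), HasDerivAt g (F (g s)) s := by
  obtain ⟨α, hαb, δ, hδ, hα⟩ :=
    hF.exists_forall_mem_closedBall_exists_eq_forall_mem_Ioo_hasDerivAt₀ b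
  -- glue `f` to a local solution through `p`; at `b` the left derivative is the limit of `F ∘ f`
  set g : ℝ → E := fun s => if s < b then f s else α s
  have hgf : ∀ s < b, g s = f s := fun s hs => if_pos hs
  have hgα : ∀ s, b ≤ s → g s = α s := fun s hs => if_neg hs.not_gt
  have hgb : g b = p := (hgα b le_rfl).trans hαb
  refine ⟨δ, hδ, g, hgf, hgb, fun s hs => ?_⟩
  rcases hs.1.eq_or_lt with rfl | hbs
  · have hleft_eq : ∀ s ∈ Ioo t b, HasDerivAt g (F (f s)) s := fun s hs =>
      (hf s hs).congr_of_eventuallyEq <| by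
        filter_upwards [Iio_mem_nhds hs.2] with x hx using hgf x hx
    have hleft : HasDerivWithinAt g (F p) (Iic b) b := by
      refine hasDerivWithinAt_Iic_of_tendsto_deriv (s := Ioo t b)
        (fun x hx => (hleft_eq x hx).differentiableAt.differentiableWithinAt) ?_
        (Ioo_mem_nhdsLT htb) ?_
      · rw [ContinuousWithinAt, hgb]
        refine (hlim.mono_left (nhdsWithin_mono _ Ioo_subset_Iio_self)).congr' ?_
        filter_upwards [self_mem_nhdsWithin] with x hx using (hgf x hx.2).symm
      · refine (hF.continuousAt.tendsto.comp hlim).congr' ?_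
        filter_upwards [Ioo_mem_nhdsLT htb] with x hx using (hleft_eq x hx).deriv.symm
    have hright : HasDerivWithinAt g (F p) (Ici b) b :=
      hαb ▸ (hα b ⟨by linarith, by linarith⟩).hasDerivWithinAt.congr (fun x hx => hgα x hx)
        (hgα b le_rfl)
    rw [hgb]
    simpa [Iic_union_Ici] using hleft.union hright
  · have := (hα s ⟨by linarith, hs.2⟩).congr_of_eventuallyEq (f₁ := g) <| by
      filter_upwards [Ioi_mem_nhds hbs] with x hx using hgα x hx.le
    rwa [← hgα s hbs.le] at this

section Riccati

variable {v v' : ℝ → ℝ} {κ v0 s t : ℝ}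

lemma image_le_of_hasDerivAt_le_sub_sq (hv : ∀ x ∈ Icc s t, HasDerivAt v (v' x) x)
    (hric : ∀ x ∈ Icc s t, v' x ≤ κ - v x ^ 2) (hκ : κ < v0 ^ 2) (hs : v s ≤ v0) :
    ∀ x ∈ Icc s t, v x ≤ v0 :=
  image_le_of_deriv_right_lt_deriv_boundary' (HasDerivAt.continuousOn hv)
    (fun x hx => (hv x (Ico_subset_Icc_self hx)).hasDerivWithinAt) hs continuousOn_const
    (fun _ _ => hasDerivWithinAt_const _ _ _) fun x hx hvx => by
      linarith [hric x (Ico_subset_Icc_self hx), hvx ▸ hκ]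

lemma sub_lt_of_hasDerivAt_le_sub_sq (hv : ∀ x ∈ Icc s t, HasDerivAt v (v' x) x)
    (hric : ∀ x ∈ Icc s t, v' x ≤ κ - v x ^ 2) (hv0 : v0 < 0) (hκ0 : 0 ≤ κ) (hκ : κ < v0 ^ 2)
    (hs : v s ≤ v0) (hst : s ≤ t) : t - s < -v0 / (v0 ^ 2 - κ) := by
  have hvle := image_le_of_hasDerivAt_le_sub_sq hv hric hκ hs
  have hvneg : ∀ x ∈ Icc s t, v x < 0 := fun x hx => (hvle x hx).trans_lt hv0
  have hinv : ∀ x ∈ Icc s t, HasDerivAt (fun y => (v y)⁻¹) (-v' x / v x ^ 2) x :=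
    fun x hx => (hv x hx).inv (hvneg x hx).ne
  -- `(1 / v)' = -v' / v ^ 2 ≥ 1 - κ / v ^ 2 ≥ 1 - κ / v0 ^ 2`
  have hslope : (1 - κ / v0 ^ 2) * (t - s) ≤ (v t)⁻¹ - (v s)⁻¹ := by
    refine (convex_Icc s t).mul_sub_le_image_sub_of_le_deriv (HasDerivAt.continuousOn hinv)
      (fun x hx => (hinv x (interior_subset hx)).differentiableAt.differentiableWithinAt)
      (fun x hx => ?_) s (left_mem_Icc.2 hst) t (right_mem_Icc.2 hst) hst
    have hx' := interior_subset hx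
    have hsq : v0 ^ 2 ≤ v x ^ 2 := by nlinarith [hvle x hx', hvneg x hx']
    have hq : κ / v0 ^ 2 * v0 ^ 2 = κ := div_mul_cancel₀ κ (pow_ne_zero 2 hv0.ne)
    rw [(hinv x hx').deriv, le_div_iff₀ (by nlinarith [hvneg x hx'])]
    nlinarith [hric x hx', mul_le_mul_of_nonneg_left hsq (div_nonneg hκ0 (sq_nonneg v0))]
  have hvt : (v t)⁻¹ < 0 := inv_lt_zero.2 (hvneg t (right_mem_Icc.2 hst))
  have hvs : v0⁻¹ ≤ (v s)⁻¹ := (inv_le_inv_of_neg hv0 (hvneg s (left_mem_Icc.2 hst))).2 hs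
  have hc : (1 - κ / v0 ^ 2) * v0 ^ 2 = v0 ^ 2 - κ := by
    rw [sub_mul, div_mul_cancel₀ κ (pow_ne_zero 2 hv0.ne), one_mul]
  rw [lt_div_iff₀ (by linarith)]
  nlinarith [mul_inv_cancel₀ hv0.ne]

lemma eventually_le_neg_inv_of_neg_sq_sub_le_deriv {b M : ℝ}
    (hv : ∀ᶠ s in 𝓝[<] b, HasDerivAt v (v' s) s ∧ -v s ^ 2 - M ≤ v' s)
    (hbot : Tendsto v (𝓝[<] b) atBot) : ∀ᶠ s in 𝓝[<] b, v s ≤ -(2 * (b - s))⁻¹ := by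
  obtain ⟨t, htb, ht⟩ := mem_nhdsLT_iff_exists_Ioo_subset.1
    (hv.and (hbot.eventually (eventually_le_atBot (-(|M| + 1)))))
  have hneg : ∀ x ∈ Ioo t b, v x < 0 := fun x hx => by linarith [(ht hx).2, abs_nonneg M]
  filter_upwards [Ioo_mem_nhdsLT htb] with s hs
  have hsub : Ico s b ⊆ Ioo t b := fun x hx => ⟨hs.1.trans_le hx.1, hx.2⟩
  -- `(1 / v)' = -v' / v ^ 2 ≤ 1 + M / v ^ 2 ≤ 2` once `v ^ 2 ≥ M`
  have key := sub_le_mul_of_hasDerivAt_le_of_tendsto (g := fun x => (v x)⁻¹) (K := 2) hs.2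
    (fun x hx => ((ht (hsub hx)).1.1.inv (hneg x (hsub hx)).ne)) (fun x hx => by
      obtain ⟨⟨-, hx'⟩, hxM⟩ := ht (hsub hx)
      rw [div_le_iff₀ (by nlinarith [hneg x (hsub hx)])]
      nlinarith [abs_nonneg M, le_abs_self M])
    (tendsto_inv_atBot_zero.comp hbot)
  have hvs := hneg s hs
  have : (2 * (b - s))⁻¹ ≤ -v s := inv_le_of_inv_le₀ (neg_pos.2 hvs) (by rw [inv_neg]; linarith)
  linarith

end Riccati

noncomputable def lksField (a σ γ lam : ℝ) (p : ℝ × ℝ) : ℝ × ℝ :=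
  (p.1 * ((a - 1) * p.2 - σ), lam / γ - p.2 ^ 2 - p.1 / γ)

lemma contDiff_lksField (a σ γ lam : ℝ) : ContDiff ℝ 1 (lksField a σ γ lam) := by
  unfold lksField; fun_prop

def SolvesLKSOn (a σ γ lam : ℝ) (I : Set ℝ) (w v : ℝ → ℝ) : Prop :=
  ∀ s ∈ I, 0 < w s ∧ HasDerivAt w (w s * ((a - 1) * v s - σ)) s ∧
    HasDerivAt v (lam / γ - v s ^ 2 - w s / γ) s

section LKS

variable {a σ γ lam : ℝ} {I : Set ℝ} {w v : ℝ → ℝ}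

lemma IsLKSSol.solvesLKSOn {sm sp : EReal} (h : IsLKSSol a σ γ lam sm sp w v)
    (hI : ∀ s ∈ I, sm < (s : EReal) ∧ (s : EReal) < sp) : SolvesLKSOn a σ γ lam I w v :=
  fun s hs => h.2 s (hI s hs).1 (hI s hs).2

lemma SolvesLKSOn.mono {J : Set ℝ} (h : SolvesLKSOn a σ γ lam I w v) (hJ : J ⊆ I) :
    SolvesLKSOn a σ γ lam J w v :=
  fun s hs => h s (hJ hs)

lemma SolvesLKSOn.hasDerivAt_lksField (h : SolvesLKSOn a σ γ lam I w v) :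
    ∀ s ∈ I, HasDerivAt (fun x => (w x, v x)) (lksField a σ γ lam (w s, v s)) s :=
  fun s hs => (h s hs).2.1.prodMk (h s hs).2.2

lemma solvesLKSOn_of_hasDerivAt_lksField {g : ℝ → ℝ × ℝ}
    (hg : ∀ s ∈ I, 0 < (g s).1 ∧ HasDerivAt g (lksField a σ γ lam (g s)) s) :
    SolvesLKSOn a σ γ lam I (fun s => (g s).1) (fun s => (g s).2) := fun s hs =>
  ⟨(hg s hs).1, (ContinuousLinearMap.fst ℝ ℝ ℝ).hasFDerivAt.comp_hasDerivAt s (hg s hs).2,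
    (ContinuousLinearMap.snd ℝ ℝ ℝ).hasFDerivAt.comp_hasDerivAt s (hg s hs).2⟩

lemma SolvesLKSOn.hasDerivAt_log (h : SolvesLKSOn a σ γ lam I w v) :
    ∀ s ∈ I, HasDerivAt (fun x => Real.log (w x)) ((a - 1) * v s - σ) s := fun s hs => by
  simpa [(h s hs).1.ne'] using (h s hs).2.1.log (h s hs).1.ne'

lemma SolvesLKSOn.deriv_v_le (h : SolvesLKSOn a σ γ lam I w v) (hγ : 0 < γ) :
    ∀ s ∈ I, lam / γ - v s ^ 2 - w s / γ ≤ lam / γ - v s ^ 2 := fun s hs => by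
  have := div_pos (h s hs).1 hγ
  linarith

lemma SolvesLKSOn.v_le {s0 b v0 : ℝ} (h : SolvesLKSOn a σ γ lam (Ico s0 b) w v) (hγ : 0 < γ)
    (hκ : lam / γ < v0 ^ 2) (hv : v s0 ≤ v0) : ∀ s ∈ Ico s0 b, v s ≤ v0 := fun s hs => by
  have h' := h.mono (Icc_subset_Ico_right hs.2)
  exact image_le_of_hasDerivAt_le_sub_sq (fun x hx => (h' x hx).2.2) (h'.deriv_v_le hγ) hκ hv s
    (right_mem_Icc.2 hs.1)

lemma SolvesLKSOn.antitoneOn_v (h : SolvesLKSOn a σ γ lam I w v) (hI : Convex ℝ I) (hγ : 0 < γ)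
    (hκ : ∀ s ∈ I, lam / γ ≤ v s ^ 2) : AntitoneOn v I :=
  hI.antitoneOn_of_hasDerivAt_nonpos (fun s hs => (h s hs).2.2) fun s hs => by
    linarith [h.deriv_v_le hγ s hs, hκ s hs]

lemma IsLKSSol.right_endpoint_le {sm sp : EReal} {s0 v0 : ℝ} (h : IsLKSSol a σ γ lam sm sp w v)
    (hγ : 0 < γ) (hlam : 0 ≤ lam) (hs0 : sm < s0) (hv0 : v0 < 0) (hκ : lam / γ < v0 ^ 2)
    (hv : v s0 ≤ v0) : sp ≤ ((s0 + -v0 / (v0 ^ 2 - lam / γ) : ℝ) : EReal) := by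
  set T := -v0 / (v0 ^ 2 - lam / γ)
  by_contra! hlt
  have hT : 0 < T := div_pos (neg_pos.2 hv0) (sub_pos.2 hκ)
  have hI : SolvesLKSOn a σ γ lam (Icc s0 (s0 + T)) w v := h.solvesLKSOn fun s hs =>
    ⟨hs0.trans_le (EReal.coe_le_coe_iff.2 hs.1), (EReal.coe_le_coe_iff.2 hs.2).trans_lt hlt⟩
  have := sub_lt_of_hasDerivAt_le_sub_sq (fun s hs => (hI s hs).2.2) (hI.deriv_v_le hγ) hv0
    (by positivity) hκ hv (by linarith)
  linarith

lemma IsMaxLKSSol.not_tendsto {sm : EReal} {b W V : ℝ} (hsol : IsMaxLKSSol a σ γ lam sm b w v)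
    (hW : 0 < W) : ¬ Tendsto (fun s => (w s, v s)) (𝓝[<] b) (𝓝 (W, V)) := by
  intro hlim
  obtain ⟨⟨hsmb, hode⟩, hmax⟩ := hsol
  have hsol' : SolvesLKSOn a σ γ lam {s : ℝ | sm < s ∧ (s : EReal) < b} w v :=
    IsLKSSol.solvesLKSOn ⟨hsmb, hode⟩ fun _ hs => hs
  obtain ⟨t, hsmt, htb⟩ := EReal.lt_iff_exists_real_btwn.1 hsmb
  obtain ⟨δ, hδ, g, hgf, hgb, hg⟩ := exists_hasDerivAt_extension_of_tendsto
    (contDiff_lksField a σ γ lam).contDiffAt (EReal.coe_lt_coe_iff.1 htb)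
    (fun s hs => hsol'.hasDerivAt_lksField s
      ⟨hsmt.trans (EReal.coe_lt_coe_iff.2 hs.1), EReal.coe_lt_coe_iff.2 hs.2⟩) hlim
  obtain ⟨ε, hε, hpos⟩ : ∃ ε > 0, ∀ {s}, dist s b < ε → 0 < (g s).1 :=
    Metric.eventually_nhds_iff.1 <|
      (hg b ⟨le_rfl, by linarith⟩).continuousAt.fst.eventually_const_lt (by simpa [hgb] using hW)
  set c := b + min δ ε
  have hbc : b < c := lt_add_of_pos_right b (lt_min hδ hε)
  have hext : SolvesLKSOn a σ γ lam {s : ℝ | sm < s ∧ (s : EReal) < c}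
      (fun s => (g s).1) (fun s => (g s).2) := by
    refine solvesLKSOn_of_hasDerivAt_lksField fun s ⟨hsm, hsc⟩ => ?_
    rcases lt_or_ge s b with hsb | hbs
    · have heq : g =ᶠ[𝓝 s] fun x => (w x, v x) := by
        filter_upwards [Iio_mem_nhds hsb] with x hx using hgf x hx
      have hs : s ∈ {s : ℝ | sm < s ∧ (s : EReal) < b} := ⟨hsm, EReal.coe_lt_coe_iff.2 hsb⟩
      rw [heq.eq_of_nhds]
      exact ⟨(hsol' s hs).1, (hsol'.hasDerivAt_lksField s hs).congr_of_eventuallyEq heq⟩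
    · have hsc' : s < b + min δ ε := EReal.coe_lt_coe_iff.1 hsc
      refine ⟨hpos ?_, hg s ⟨hbs, by linarith [min_le_left δ ε]⟩⟩
      rw [Real.dist_eq, abs_of_nonneg (sub_nonneg.2 hbs)]
      linarith [min_le_right δ ε]
  refine hmax sm c (fun s => (g s).1) (fun s => (g s).2) le_rfl
    (EReal.coe_le_coe_iff.2 hbc.le) (Or.inr (EReal.coe_lt_coe_iff.2 hbc)) (fun s _ hs => ?_)
    ⟨hsmb.trans (EReal.coe_lt_coe_iff.2 hbc), fun s hsm hsc => hext s ⟨hsm, hsc⟩⟩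
  simp [hgf s (EReal.coe_lt_coe_iff.1 hs)]

lemma SolvesLKSOn.exists_pos_tendsto_w {b c : ℝ} (h : SolvesLKSOn a σ γ lam I w v)
    (hI : I ∈ 𝓝[<] b) (hv : Tendsto (fun s => (a - 1) * v s) (𝓝[<] b) (𝓝 c)) :
    ∃ W > 0, Tendsto w (𝓝[<] b) (𝓝 W) := by
  obtain ⟨ℓ, hℓ⟩ := exists_tendsto_nhdsLT_of_hasDerivAt (u := fun s => Real.log (w s))
    (eventually_of_mem hI h.hasDerivAt_log) (hv.sub_const σ)
  refine ⟨Real.exp ℓ, Real.exp_pos ℓ, ((Real.continuous_exp.tendsto ℓ).comp hℓ).congr' ?_⟩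
  filter_upwards [hI] with s hs using Real.exp_log (h s hs).1

lemma IsMaxLKSSol.tendsto_v_atBot {sm : EReal} {s0 b : ℝ} (hsol : IsMaxLKSSol a σ γ lam sm b w v)
    (hs0 : sm < s0) (hs0b : s0 < b) (hv : AntitoneOn v (Ioo s0 b)) :
    Tendsto v (𝓝[<] b) atBot := by
  have hI : SolvesLKSOn a σ γ lam (Ioo s0 b) w v := hsol.1.solvesLKSOn fun s hs =>
    ⟨hs0.trans (EReal.coe_lt_coe_iff.2 hs.1), EReal.coe_lt_coe_iff.2 hs.2⟩
  have hmono : MonotoneOn (fun s => -v s) (Ioo s0 b) :=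
    fun x hx y hy hxy => neg_le_neg (hv hx hy hxy)
  by_cases hbdd : BddAbove ((fun s => -v s) '' Ioo s0 b)
  · have hV := (hmono.tendsto_nhdsWithin_Ioo_left (nonempty_Ioo.2 hs0b) hbdd).neg
    simp only [neg_neg] at hV
    obtain ⟨W, hW, hw⟩ := hI.exists_pos_tendsto_w (Ioo_mem_nhdsLT hs0b) (hV.const_mul (a - 1))
    exact absurd (hw.prodMk_nhds hV) (hsol.not_tendsto hW)
  · exact tendsto_neg_atTop_iff.1 (hmono.tendsto_nhdsLT_atTop hbdd)

lemma SolvesLKSOn.eventually_v_le {b W : ℝ} (h : SolvesLKSOn a σ γ lam I w v) (hI : I ∈ 𝓝[<] b)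
    (hγ : 0 < γ) (hlam : 0 ≤ lam) (hW : ∀ s ∈ I, w s ≤ W) (hv : Tendsto v (𝓝[<] b) atBot) :
    ∀ᶠ s in 𝓝[<] b, v s ≤ -(2 * (b - s))⁻¹ := by
  refine eventually_le_neg_inv_of_neg_sq_sub_le_deriv (M := W / γ)
    (eventually_of_mem hI fun s hs => ⟨(h s hs).2.2, ?_⟩) hv
  have := div_le_div_of_nonneg_right (hW s hs) hγ.le
  have := div_nonneg hlam hγ.le
  linarith

lemma SolvesLKSOn.tendsto_w_atTop {s0 b : ℝ} (h : SolvesLKSOn a σ γ lam (Ico s0 b) w v)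
    (hs0b : s0 < b) (ha : a < 1) (hγ : 0 < γ) (hlam : 0 ≤ lam) (hv : Tendsto v (𝓝[<] b) atBot) :
    Tendsto w (𝓝[<] b) atTop := by
  obtain ⟨t, htb, ht⟩ := mem_nhdsLT_iff_exists_Ioo_subset.1 <|
    inter_mem (Ioo_mem_nhdsLT hs0b) (hv.eventually (eventually_le_atBot (σ / (a - 1))))
  have hI : SolvesLKSOn a σ γ lam (Ioo t b) w v := h.mono fun s hs => Ioo_subset_Ico_self (ht hs).1
  have hu : MonotoneOn (fun s => Real.log (w s)) (Ioo t b) :=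
    (convex_Ioo t b).monotoneOn_of_hasDerivAt_nonneg hI.hasDerivAt_log fun s hs => by
      have := mul_le_mul_of_nonpos_left (ht hs).2 (sub_nonpos.2 ha.le)
      rw [mul_div_cancel₀ σ (sub_neg.2 ha).ne] at this
      linarith
  by_cases hbdd : BddAbove ((fun s => Real.log (w s)) '' Ioo t b)
  · exfalso
    obtain ⟨U, hU⟩ := hbdd
    have hvle := hI.eventually_v_le (Ioo_mem_nhdsLT htb) hγ hlam (W := Real.exp U)
      (fun s hs => by simpa [Real.exp_log (hI s hs).1] using Real.exp_le_exp.2 (hU ⟨s, hs, rfl⟩)) hv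
    have hneg : Tendsto (fun s => -Real.log (w s)) (𝓝[<] b) atBot := by
      refine tendsto_atBot_of_hasDerivAt_le_sub_div (u' := fun s => -((a - 1) * v s - σ))
        (k := (1 - a) / 2) (C := σ) (by linarith) ?_
      filter_upwards [Ioo_mem_nhdsLT htb, hvle, self_mem_nhdsWithin] with s hs hvs hsb
      refine ⟨(hI.hasDerivAt_log s hs).neg, ?_⟩
      have : (1 - a) / 2 / (b - s) = (1 - a) * (2 * (b - s))⁻¹ := by rw [div_div, div_eq_mul_inv]
      nlinarith
    obtain ⟨s, hUs, hs⟩ :=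
      ((tendsto_neg_atBot_iff.1 hneg).eventually_gt_atTop U).and (Ioo_mem_nhdsLT htb) |>.exists
    exact (hU ⟨s, hs, rfl⟩).not_gt hUs
  · refine (Real.tendsto_exp_atTop.comp (hu.tendsto_nhdsLT_atTop hbdd)).congr' ?_
    filter_upwards [Ioo_mem_nhdsLT htb] with s hs using Real.exp_log (hI s hs).1

lemma SolvesLKSOn.tendsto_w_zero {s0 b : ℝ} (h : SolvesLKSOn a σ γ lam (Ico s0 b) w v)
    (hs0b : s0 < b) (ha : 1 < a) (hσ : 0 ≤ σ) (hγ : 0 < γ) (hlam : 0 ≤ lam)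
    (hvneg : ∀ s ∈ Ico s0 b, v s < 0) (hv : Tendsto v (𝓝[<] b) atBot) :
    Tendsto w (𝓝[<] b) (𝓝 0) := by
  have hI : Ico s0 b ∈ 𝓝[<] b := mem_of_superset (Ioo_mem_nhdsLT hs0b) Ioo_subset_Ico_self
  have hw : AntitoneOn w (Ico s0 b) :=
    (convex_Ico s0 b).antitoneOn_of_hasDerivAt_nonpos (fun s hs => (h s hs).2.1) fun s hs =>
      mul_nonpos_of_nonneg_of_nonpos (h s hs).1.le (by nlinarith [hvneg s hs])
  have hvle := h.eventually_v_le hI hγ hlam (W := w s0)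
    (fun s hs => hw (left_mem_Ico.2 hs0b) hs hs.1) hv
  have hlog : Tendsto (fun s => Real.log (w s)) (𝓝[<] b) atBot := by
    refine tendsto_atBot_of_hasDerivAt_le_sub_div (u' := fun s => (a - 1) * v s - σ)
      (k := (a - 1) / 2) (C := -σ) (by linarith) ?_
    filter_upwards [hI, hvle, self_mem_nhdsWithin] with s hs hvs hsb
    refine ⟨h.hasDerivAt_log s hs, ?_⟩
    have : (a - 1) / 2 / (b - s) = (a - 1) * (2 * (b - s))⁻¹ := by rw [div_div, div_eq_mul_inv]
    nlinarith
  refine (Real.tendsto_exp_atBot.comp hlog).congr' ?_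
  filter_upwards [hI] with s hs using Real.exp_log (h s hs).1

end LKS

theorem stmt5_general (a σ γ lam : ℝ) (hσ : 0 < σ) (hγ : 0 < γ) (hlam : 0 < lam)
    (v0 s0 : ℝ) (hv0 : v0 < -Real.sqrt (lam / γ))
    (sm sp : EReal) (w v : ℝ → ℝ)
    (hsol : IsMaxLKSSol a σ γ lam sm sp w v)
    (hs0m : sm < (s0 : EReal)) (hs0p : (s0 : EReal) < sp)
    (hv : v s0 = v0) :
    ∃ spr : ℝ, sp = (spr : EReal) ∧
      Tendsto v (𝓝[<] spr) atBot ∧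
      (a < 1 → Tendsto w (𝓝[<] spr) atTop) ∧
      (a = 1 → ∃ L : ℝ, 0 < L ∧ Tendsto w (𝓝[<] spr) (𝓝 L)) ∧
      (1 < a → Tendsto w (𝓝[<] spr) (𝓝 0)) := by
  have hκ : lam / γ < v0 ^ 2 := by simpa using Real.lt_sq_of_sqrt_lt (lt_neg_of_lt_neg hv0)
  have hv0neg : v0 < 0 := hv0.trans_le (neg_nonpos.2 (Real.sqrt_nonneg _))
  have hsp := hsol.1.right_endpoint_le hγ hlam.le hs0m hv0neg hκ hv.le
  obtain ⟨b, rfl⟩ : ∃ b : ℝ, sp = b := ⟨sp.toReal,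
    (EReal.coe_toReal (ne_top_of_le_ne_top (EReal.coe_ne_top _) hsp) (ne_bot_of_gt hs0p)).symm⟩
  have hs0b : s0 < b := EReal.coe_lt_coe_iff.1 hs0p
  have hI : SolvesLKSOn a σ γ lam (Ico s0 b) w v := hsol.1.solvesLKSOn fun s hs =>
    ⟨hs0m.trans_le (EReal.coe_le_coe_iff.2 hs.1), EReal.coe_lt_coe_iff.2 hs.2⟩
  have hvle := hI.v_le hγ hκ hv.le
  have hvanti := hI.antitoneOn_v (convex_Ico s0 b) hγ fun s hs => by nlinarith [hvle s hs]
  have hvbot := hsol.tendsto_v_atBot hs0m hs0b (hvanti.mono Ioo_subset_Ico_self)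
  refine ⟨b, rfl, hvbot, fun ha1 => hI.tendsto_w_atTop hs0b ha1 hγ hlam.le hvbot, fun ha1 => ?_,
    fun ha1 => hI.tendsto_w_zero hs0b ha1 hσ.le hγ hlam.le
      (fun s hs => (hvle s hs).trans_lt hv0neg) hvbot⟩
  obtain ⟨W, hW, hwW⟩ := hI.exists_pos_tendsto_w (c := 0)
    (mem_of_superset (Ioo_mem_nhdsLT hs0b) Ioo_subset_Ico_self) (by simp [ha1])
  exact ⟨W, hW, hwW⟩

/-- For `a > 0`, `v₀ < −v⋆`, `w₀ > 0`, any maximal solution of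
(LKS) through `(w₀, v₀)` has a finite right endpoint `s₊`, `v → −∞` at `s₊⁻`, and
`w → +∞` (if `a < 1`), `w →` a finite positive limit (if `a = 1`), `w → 0`
(if `a > 1`) as `s → s₊⁻`. -/
theorem stmt5 (a σ γ lam : ℝ) (ha : 0 < a) (hσ : 0 < σ) (hγ : 0 < γ) (hlam : 0 < lam)
    (v0 w0 s0 : ℝ) (hv0 : v0 < -Real.sqrt (lam / γ)) (hw0 : 0 < w0)
    (sm sp : EReal) (w v : ℝ → ℝ)
    (hsol : IsMaxLKSSol a σ γ lam sm sp w v)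
    (hs0m : sm < (s0 : EReal)) (hs0p : (s0 : EReal) < sp)
    (hw : w s0 = w0) (hv : v s0 = v0) :
    ∃ spr : ℝ, sp = (spr : EReal) ∧
      Tendsto v (𝓝[<] spr) atBot ∧
      (a < 1 → Tendsto w (𝓝[<] spr) atTop) ∧
      (a = 1 → ∃ L : ℝ, 0 < L ∧ Tendsto w (𝓝[<] spr) (𝓝 L)) ∧
      (1 < a → Tendsto w (𝓝[<] spr) (𝓝 0)) :=
  stmt5_general a σ γ lam hσ hγ hlam v0 s0 hv0 sm sp w v hsol hs0m hs0p hv
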